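/- With A, B, C consistent 2-marginals for (r,c,h)-tables and the extended 2-marginals for (r+1,c+1,h+1)-tables R defined as above, there exists a nonnegative integer table R satisfying the extended 2-marginals with R_{1,1,1} = 0 if and only if there exists a nonnegative integer (r,c,h)-table with 2-marginals A, B, C. -/

import Mathlib

/-!
Write `T` for the common total. If `R₁₁₁ = 0`, the line `R_{1,1,u}` (`u ≥ 2`) carries mass `T`,
as does the whole part `u ≥ 2` of the face `R_{·,1,·}` (its `u`-marginals are the column sums of
`C`), so `R_{s,1,u} = 0` for `s, u ≥ 2`. Feeding this into the remaining marginals of the three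
faces through the corner forces in turn `R_{s,1,1} = C_{s-1,+}`, `R_{s,t,1} = 0`,
`R_{1,t,1} = A_{+,t-1}` and `R_{1,t,u} = 0`. So these faces carry mass only on the three axes
through the corner, and the inner subtable has 2-marginals `A, B, C`. Conversely, a table with
2-marginals `A, B, C`, bordered by the 1-marginals on those axes and zeros elsewhere, has the
extended marginals.
-/

/-- Extended marginal `R_{s,t,+}` (index `none` is the new first index). -/
def extST (r c h : ℕ) (A : Fin r → Fin c → ℕ) (C : Fin r → Fin h → ℕ) :
    Option (Fin r) → Option (Fin c) → ℕ := fun s t =>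
  match s, t with
  | none, none => ∑ i, ∑ j, A i j
  | some i, none => ∑ k, C i k
  | none, some j => ∑ i, A i j
  | some i, some j => A i j

/-- Extended marginal `R_{+,t,u}`. -/
def extTU (r c h : ℕ) (B : Fin c → Fin h → ℕ) (C : Fin r → Fin h → ℕ) :
    Option (Fin c) → Option (Fin h) → ℕ := fun t u =>
  match t, u with
  | none, none => ∑ j, ∑ k, B j k
  | some j, none => ∑ k, B j k
  | none, some k => ∑ i, C i k.rev
  | some j, some k => B j k

/-- Extended marginal `R_{s,+,u}`. -/
def extSU (r c h : ℕ) (C : Fin r → Fin h → ℕ) :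
    Option (Fin r) → Option (Fin h) → ℕ := fun s u =>
  match s, u with
  | none, none => ∑ i, ∑ k, C i k
  | some i, none => ∑ k, C i k
  | none, some k => ∑ i, C i k.rev
  | some i, some k => C i k

open Finset

theorem eq_zero_of_add_sum_eq_self {ι : Type*} [Fintype ι] {a : ℕ} {f : ι → ℕ}
    (h : a + ∑ i, f i = a) (i : ι) : f i = 0 :=
  sum_eq_zero_iff.mp (by omega) i (mem_univ i)

theorem sum_comp_rev {M : Type*} [AddCommMonoid M] {n : ℕ} (f : Fin n → M) :
    ∑ k : Fin n, f k.rev = ∑ k, f k :=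
  Equiv.sum_comp Fin.revPerm f

def borderTable {r c h : ℕ} (A : Fin r → Fin c → ℕ) (C : Fin r → Fin h → ℕ)
    (x : Fin r → Fin c → Fin h → ℕ) : Option (Fin r) → Option (Fin c) → Option (Fin h) → ℕ
  | some i, some j, some k => x i j k
  | some i, none, none => ∑ k, C i k
  | none, some j, none => ∑ i, A i j
  | none, none, some k => ∑ i, C i k.rev
  | _, _, _ => 0

section Marginals

variable {r c h : ℕ} {A : Fin r → Fin c → ℕ} {B : Fin c → Fin h → ℕ} {C : Fin r → Fin h → ℕ}

theorem sum_sum_rev_C_eq_total_A (hAC : ∀ i, ∑ k, C i k = ∑ j, A i j) :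
    ∑ k : Fin h, ∑ i, C i k.rev = ∑ i, ∑ j, A i j := by
  rw [sum_comp_rev (fun k => ∑ i, C i k), sum_comm]
  exact sum_congr rfl fun i _ => hAC i

theorem total_C_eq_total_B (hBC : ∀ k, ∑ i, C i k = ∑ j, B j k) :
    ∑ i, ∑ k, C i k = ∑ j, ∑ k, B j k := by
  rw [sum_comm, sum_congr rfl fun k _ => hBC k, sum_comm]

theorem sum_sum_A_comm_eq_total_C (hAC : ∀ i, ∑ k, C i k = ∑ j, A i j) :
    ∑ j, ∑ i, A i j = ∑ i, ∑ k, C i k := by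
  rw [sum_comm]
  exact (sum_congr rfl fun i _ => hAC i).symm

variable {R : Option (Fin r) → Option (Fin c) → Option (Fin h) → ℕ}

theorem off_axis_entries_eq_zero_of_corner_eq_zero
    (hAC : ∀ i, ∑ k, C i k = ∑ j, A i j) (hAB : ∀ j, ∑ i, A i j = ∑ k, B j k)
    (hST : ∀ s t, ∑ u, R s t u = extST r c h A C s t)
    (hTU : ∀ t u, ∑ s, R s t u = extTU r c h B C t u)
    (hSU : ∀ s u, ∑ t, R s t u = extSU r c h C s u) (h0 : R none none none = 0) :
    (∀ i k, R (some i) none (some k) = 0) ∧ (∀ i j, R (some i) (some j) none = 0) ∧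
      ∀ j k, R none (some j) (some k) = 0 := by
  have axis_u : ∑ k, R none none (some k) = ∑ i, ∑ j, A i j := by
    simpa [Fintype.sum_option, extST, h0] using hST none none
  have face_su : ∀ k, R none none (some k) + ∑ i, R (some i) none (some k) = ∑ i, C i k.rev :=
    fun k => by simpa [Fintype.sum_option, extTU] using hTU none (some k)
  have hsu : ∀ i k, R (some i) none (some k) = 0 := by
    have hsum := Fintype.sum_congr _ _ face_su
    rw [sum_add_distrib, axis_u, sum_sum_rev_C_eq_total_A hAC] at hsum
    intro i k
    exact sum_eq_zero_iff.mp (eq_zero_of_add_sum_eq_self hsum k) i (mem_univ i)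
  have axis_s : ∀ i, R (some i) none none = ∑ k, C i k := fun i => by
    simpa [Fintype.sum_option, extST, hsu] using hST (some i) none
  have hst : ∀ i j, R (some i) (some j) none = 0 := fun i => by
    have face_i := hSU (some i) none
    rw [Fintype.sum_option, axis_s] at face_i
    exact eq_zero_of_add_sum_eq_self face_i
  have axis_t : ∀ j, R none (some j) none = ∑ i, A i j := fun j => by
    simpa [Fintype.sum_option, extTU, hst, hAB] using hTU (some j) none
  have htu : ∀ j k, R none (some j) (some k) = 0 := fun j => by
    have face_j := hST none (some j)
    rw [Fintype.sum_option, axis_t] at face_j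
    exact eq_zero_of_add_sum_eq_self face_j
  exact ⟨hsu, hst, htu⟩

variable {x : Fin r → Fin c → Fin h → ℕ}

theorem sum_borderTable_third (hAC : ∀ i, ∑ k, C i k = ∑ j, A i j)
    (hx : ∀ i j, ∑ k, x i j k = A i j) (s : Option (Fin r)) (t : Option (Fin c)) :
    ∑ u, borderTable A C x s t u = extST r c h A C s t := by
  rcases s with _ | i <;> rcases t with _ | j <;>
    simp [Fintype.sum_option, borderTable, extST, sum_sum_rev_C_eq_total_A hAC, hx]

theorem sum_borderTable_first (hAB : ∀ j, ∑ i, A i j = ∑ k, B j k)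
    (hBC : ∀ k, ∑ i, C i k = ∑ j, B j k) (hx : ∀ j k, ∑ i, x i j k = B j k)
    (t : Option (Fin c)) (u : Option (Fin h)) :
    ∑ s, borderTable A C x s t u = extTU r c h B C t u := by
  rcases t with _ | j <;> rcases u with _ | k <;>
    simp [Fintype.sum_option, borderTable, extTU, total_C_eq_total_B hBC, hAB, hx]

theorem sum_borderTable_second (hAC : ∀ i, ∑ k, C i k = ∑ j, A i j)
    (hx : ∀ i k, ∑ j, x i j k = C i k) (s : Option (Fin r)) (u : Option (Fin h)) :
    ∑ t, borderTable A C x s t u = extSU r c h C s u := by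
  rcases s with _ | i <;> rcases u with _ | k <;>
    simp [Fintype.sum_option, borderTable, extSU, sum_sum_A_comm_eq_total_C hAC, hx]

end Marginals

theorem corner_zero_iff_feasible (r c h : ℕ)
    (A : Fin r → Fin c → ℕ) (B : Fin c → Fin h → ℕ) (C : Fin r → Fin h → ℕ)
    (hAC : ∀ i, ∑ k, C i k = ∑ j, A i j)
    (hAB : ∀ j, ∑ i, A i j = ∑ k, B j k)
    (hBC : ∀ k, ∑ i, C i k = ∑ j, B j k) :
    (∃ R : Option (Fin r) → Option (Fin c) → Option (Fin h) → ℕ,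
      (∀ s t, ∑ u, R s t u = extST r c h A C s t) ∧
      (∀ t u, ∑ s, R s t u = extTU r c h B C t u) ∧
      (∀ s u, ∑ t, R s t u = extSU r c h C s u) ∧
      R none none none = 0) ↔
    (∃ x : Fin r → Fin c → Fin h → ℕ,
      (∀ i j, ∑ k, x i j k = A i j) ∧
      (∀ j k, ∑ i, x i j k = B j k) ∧
      (∀ i k, ∑ j, x i j k = C i k)) := by
  constructor
  · rintro ⟨R, hST, hTU, hSU, h0⟩
    obtain ⟨hsu, hst, htu⟩ :=
      off_axis_entries_eq_zero_of_corner_eq_zero hAC hAB hST hTU hSU h0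
    refine ⟨fun i j k => R (some i) (some j) (some k), fun i j => ?_, fun j k => ?_, fun i k => ?_⟩
    · simpa [Fintype.sum_option, extST, hst] using hST (some i) (some j)
    · simpa [Fintype.sum_option, extTU, htu] using hTU (some j) (some k)
    · simpa [Fintype.sum_option, extSU, hsu] using hSU (some i) (some k)
  · rintro ⟨x, hxST, hxTU, hxSU⟩
    exact ⟨borderTable A C x, sum_borderTable_third hAC hxST, sum_borderTable_first hAB hBC hxTU,
      sum_borderTable_second hAC hxSU, rfl⟩
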